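/- For every $\alpha_1 \ge 0$, $\alpha_2 > 0$, $C_1, C_2, C_N > 0$, and $N > 1$, there exist $C > 0$ and $h_0 \in (0,1)$ such that for all $0 < h < h_0$: if $v : [-C_1 h |\log h|^{-\alpha_1}, h^N] \to \mathbb{R}_{>0}$ is log-convex, $v(-C_1 h |\log h|^{-\alpha_1}) \le C_2 h^{-\alpha_2}$, and $v(h^N) \le C_N |\log h|^{\alpha_1+1} h^{-1}$, then $v(0) \le C |\log h|^{\alpha_1+1} h^{-1}$. -/

import Mathlib

open Filter Set Real

lemma aux_tendsto_stmt7 (p c : ℝ) (hc : 0 < c) :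
    Filter.Tendsto (fun h : ℝ => h ^ c * |Real.log h| ^ p) (nhdsWithin 0 (Set.Ioi 0)) (nhds 0) := by
  have h1 : Filter.Tendsto (fun h : ℝ => -Real.log h) (nhdsWithin 0 (Set.Ioi 0)) Filter.atTop :=
    Filter.tendsto_neg_atTop_iff.mpr Real.tendsto_log_nhdsGT_zero
  have h2 := (tendsto_rpow_mul_exp_neg_mul_atTop_nhds_zero p c hc).comp h1
  refine h2.congr' ?_
  filter_upwards [Ioo_mem_nhdsGT_of_mem (Set.mem_Ico.mpr ⟨le_refl (0:ℝ), zero_lt_one⟩)] with h hh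
  obtain ⟨hpos, hlt1⟩ := hh
  have hlog : Real.log h < 0 := Real.log_neg hpos hlt1
  have habs : |Real.log h| = -Real.log h := abs_of_neg hlog
  have hrpow : h ^ c = Real.exp (-c * -Real.log h) := by
    rw [Real.rpow_def_of_pos hpos]; ring_nf
  simp only [Function.comp_apply, habs, hrpow]
  ring

theorem stmt_7 (α₁ α₂ C₁ C₂ C_N N : ℝ) (hα₁ : 0 ≤ α₁) (hα₂ : 0 < α₂)
    (hC₁ : 0 < C₁) (hC₂ : 0 < C₂) (hC_N : 0 < C_N) (hN : 1 < N) :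
    ∃ C > 0, ∃ h₀ ∈ Set.Ioo (0 : ℝ) 1, ∀ h, 0 < h → h < h₀ →
      ∀ v : ℝ → ℝ,
        (∀ x ∈ Set.Icc (-(C₁ * h * |Real.log h| ^ (-α₁))) (h ^ N), 0 < v x) →
        ConvexOn ℝ (Set.Icc (-(C₁ * h * |Real.log h| ^ (-α₁))) (h ^ N))
          (fun x => Real.log (v x)) →
        v (-(C₁ * h * |Real.log h| ^ (-α₁))) ≤ C₂ * h ^ (-α₂) →
        v (h ^ N) ≤ C_N * |Real.log h| ^ (α₁ + 1) * h⁻¹ →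
        v 0 ≤ C * |Real.log h| ^ (α₁ + 1) * h⁻¹ := by
  set K : ℝ := |Real.log C₂ - Real.log C_N| + |1 - α₂| + 1 with hKdef
  have hK : 0 < K := by positivity
  have hev : ∀ᶠ h in nhdsWithin (0:ℝ) (Set.Ioi 0),
      h ^ (N - 1) * |Real.log h| ^ (α₁ + 1) < C₁ / K :=
    (aux_tendsto_stmt7 (α₁ + 1) (N - 1) (by linarith)).eventually_lt_const (by positivity)
  obtain ⟨u, hu, hsub⟩ := mem_nhdsGT_iff_exists_Ioo_subset.mp hev
  refine ⟨Real.exp 1 * C_N, by positivity, min u (Real.exp (-1)),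
    ⟨lt_min hu (Real.exp_pos _), lt_of_le_of_lt (min_le_right _ _)
      (Real.exp_lt_one_iff.mpr (by norm_num))⟩, ?_⟩
  intro h hpos hlt v hv hconv hA hM
  have hltu : h < u := lt_of_lt_of_le hlt (min_le_left _ _)
  have hlte : h < Real.exp (-1) := lt_of_lt_of_le hlt (min_le_right _ _)
  have hlog : Real.log h < -1 := by
    calc Real.log h < Real.log (Real.exp (-1)) := Real.log_lt_log hpos hlte
    _ = -1 := Real.log_exp _
  set L : ℝ := |Real.log h| with hLdef
  have habs : L = -Real.log h := abs_of_neg (by linarith)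
  have hL1 : 1 < L := by rw [habs]; linarith
  have hL : 0 < L := by linarith
  have hsmall : h ^ (N - 1) * L ^ (α₁ + 1) ≤ C₁ / K := (hsub ⟨hpos, hltu⟩).le
  set a : ℝ := C₁ * h * L ^ (-α₁) with hadef
  set b : ℝ := h ^ N with hbdef
  have ha : 0 < a := by
    have := Real.rpow_pos_of_pos hL (-α₁); positivity
  have hb : 0 < b := Real.rpow_pos_of_pos hpos N
  have hab : 0 < a + b := by linarith
  set θ : ℝ := b / (a + b) with hθdef
  set s : ℝ := a / (a + b) with hsdef
  have hθ0 : 0 ≤ θ := by positivity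
  have hs0 : 0 ≤ s := by positivity
  have hsum : θ + s = 1 := by
    rw [hθdef, hsdef, ← add_div, add_comm]; exact div_self hab.ne'
  have hcomb : θ • (-a) + s • b = (0:ℝ) := by
    rw [smul_eq_mul, smul_eq_mul, hθdef, hsdef]; ring
  have mem1 : -a ∈ Set.Icc (-a) b := ⟨le_refl _, by linarith⟩
  have mem2 : b ∈ Set.Icc (-a) b := ⟨by linarith, le_refl _⟩
  have mem0 : (0:ℝ) ∈ Set.Icc (-a) b := ⟨by linarith, hb.le⟩
  have key := hconv.2 mem1 mem2 hθ0 hs0 hsum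
  rw [hcomb] at key
  -- bound the endpoint logs
  set A : ℝ := C₂ * h ^ (-α₂) with hAdef
  set M : ℝ := C_N * L ^ (α₁ + 1) * h⁻¹ with hMdef
  have hApos : 0 < A := by
    have := Real.rpow_pos_of_pos hpos (-α₂); positivity
  have hMpos : 0 < M := by
    have := Real.rpow_pos_of_pos hL (α₁ + 1); positivity
  have hlogA : Real.log (v (-a)) ≤ Real.log A := Real.log_le_log (hv _ mem1) hA
  have hlogM : Real.log (v b) ≤ Real.log M := Real.log_le_log (hv _ mem2) hM
  have key2 : Real.log (v 0) ≤ Real.log M + θ * (Real.log A - Real.log M) := by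
    have hs1 : s = 1 - θ := by linarith
    have : θ * Real.log (v (-a)) + s * Real.log (v b)
        ≤ θ * Real.log A + s * Real.log M := by
      gcongr
    calc Real.log (v 0) ≤ θ * Real.log A + s * Real.log M := le_trans key this
    _ = Real.log M + θ * (Real.log A - Real.log M) := by rw [hs1]; ring
  -- bound the correction term by 1
  have hd : Real.log A - Real.log M ≤ K * L := by
    have eA : Real.log A = Real.log C₂ + (-α₂) * Real.log h := by
      rw [hAdef, Real.log_mul hC₂.ne' (Real.rpow_pos_of_pos hpos _).ne', Real.log_rpow hpos]
    have eM : Real.log M = Real.log C_N + (α₁ + 1) * Real.log L + (- Real.log h) := by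
      rw [hMdef, Real.log_mul (by positivity) (by positivity),
        Real.log_mul hC_N.ne' (Real.rpow_pos_of_pos hL _).ne', Real.log_rpow hL,
        Real.log_inv]
    have e1 : Real.log C₂ - Real.log C_N ≤ |Real.log C₂ - Real.log C_N| := le_abs_self _
    have e2 : 0 ≤ (α₁ + 1) * Real.log L := by
      have := Real.log_nonneg hL1.le; positivity
    have e3 : (α₂ - 1) * L ≤ |1 - α₂| * L := by
      have : α₂ - 1 ≤ |1 - α₂| := by
        rw [abs_sub_comm]; exact le_abs_self _
      exact mul_le_mul_of_nonneg_right this hL.le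
    have e4 : |Real.log C₂ - Real.log C_N| ≤ |Real.log C₂ - Real.log C_N| * L :=
      le_mul_of_one_le_right (abs_nonneg _) hL1.le
    have hlh : Real.log h = -L := by rw [habs]; ring
    have hKt : K * L = |Real.log C₂ - Real.log C_N| * L + |1 - α₂| * L + L := by
      rw [hKdef]; ring
    rw [eA, eM, hlh]
    linarith
  have hθa : θ ≤ b / a :=
    div_le_div_of_nonneg_left hb.le ha (by linarith)
  have hba : b * (K * L) ≤ a := by
    have id1 : h ^ (N - 1) * h = h ^ N := by
      rw [← Real.rpow_add_one hpos.ne' (N - 1)]; ring_nf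
    have id2 : L ^ (α₁ + 1) * L ^ (-α₁) = L := by
      rw [← Real.rpow_add hL]
      norm_num
    have step : K * (h ^ (N - 1) * L ^ (α₁ + 1)) * (h * L ^ (-α₁))
        ≤ K * (C₁ / K) * (h * L ^ (-α₁)) := by
      have hx : 0 < h * L ^ (-α₁) := by
        have := Real.rpow_pos_of_pos hL (-α₁); positivity
      gcongr
    calc b * (K * L) = K * (h ^ N * L) := by rw [hbdef]; ring
    _ = K * ((h ^ (N - 1) * h) * (L ^ (α₁ + 1) * L ^ (-α₁))) := by rw [id1, id2]
    _ = K * (h ^ (N - 1) * L ^ (α₁ + 1)) * (h * L ^ (-α₁)) := by ring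
    _ ≤ K * (C₁ / K) * (h * L ^ (-α₁)) := step
    _ = a := by rw [hadef]; field_simp
  have hcorr : θ * (Real.log A - Real.log M) ≤ 1 := by
    calc θ * (Real.log A - Real.log M) ≤ θ * (K * L) :=
          mul_le_mul_of_nonneg_left hd hθ0
    _ ≤ (b / a) * (K * L) := mul_le_mul_of_nonneg_right hθa (by positivity)
    _ = b * (K * L) / a := by ring
    _ ≤ a / a := by gcongr
    _ = 1 := div_self ha.ne'
  have final : Real.log (v 0) ≤ Real.log M + 1 := by linarith
  have hv0 : 0 < v 0 := hv _ mem0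
  calc v 0 = Real.exp (Real.log (v 0)) := (Real.exp_log hv0).symm
  _ ≤ Real.exp (Real.log M + 1) := Real.exp_le_exp.mpr final
  _ = M * Real.exp 1 := by rw [Real.exp_add, Real.exp_log hMpos]
  _ = Real.exp 1 * C_N * L ^ (α₁ + 1) * h⁻¹ := by rw [hMdef]; ring
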